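/- Example 2.4: Let X = {z ∈ ℂ : |z| ≤ 1}, m = 2, f_0(z) = z²(z + i)/(4(1 + i)) and f_1(z) = (3z + 1)/4, and let G : [0,1] → X be the unique continuous solution of G(t) = f_0(G(2t)) for 0 ≤ t ≤ 1/2 and G(t) = f_1(G(2t − 1)) for 1/2 ≤ t ≤ 1. Then: (a) |G(t)| ≤ √2/4 for all t ∈ [0,1/2] and |G(t)| ≤ 2^{−5} for all t ∈ [0,1/4]; (b) α = (1/2)∫₀¹ −log_2( 9|G(t)|(3|G(t)| + 2) / (16√2) ) dt ≥ 9/4 − (log_2 15)/2 − (1/2)∫₀¹ log_2 |G(t)| dt > 1; and consequently (c) the Fréchet derivative of G exists and is zero Lebesgue-a.e. -/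

import Mathlib

open MeasureTheory Filter Set Topology
open scoped ENNReal

noncomputable section

/-- The first digit `A₁(t) = ⌊m t⌋` of the `m`-adic expansion of `t ∈ [0,1)`. -/
def A1 (m : ℕ) (t : ℝ) : ℕ := (⌊(m : ℝ) * t⌋).toNat

/-- The shift map `Ht = m t - ⌊m t⌋` on `[0,1)`. -/
def Hmap (m : ℕ) (t : ℝ) : ℝ := (m : ℝ) * t - ⌊(m : ℝ) * t⌋

/-- `-log_m x` as a value in `[0,∞]`, with the convention `-log_m 0 = +∞`. -/
def negLogbE (m : ℕ) (x : ℝ) : ℝ≥0∞ :=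
  if x = 0 then ⊤ else ENNReal.ofReal (-Real.logb m x)

/-- The maps `f₀(z) = z²(z+i)/(4(1+i))` and `f₁(z) = (3z+1)/4` of Example 2.4. -/
def fEx : ℕ → ℂ → ℂ := fun i z =>
  if i = 0 then z ^ 2 * (z + Complex.I) / (4 * (1 + Complex.I)) else (3 * z + 1) / 4

/-- `α = ∫₀¹ -log₂ ‖Df_{A₁(t)}(G(Ht))‖ dt ∈ [0,∞]`, the Fréchet derivative being taken
over `ℝ` (`ℂ` is regarded as a real two-dimensional Banach space), with `-log₂ 0 = +∞`. -/
def alphaEx (G : ℝ → ℂ) : ℝ≥0∞ :=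
  ∫⁻ t in Set.Ico (0 : ℝ) 1, negLogbE 2 ‖fderiv ℝ (fEx (A1 2 t)) (G (Hmap 2 t))‖

end

/-!
`‖f₀ z‖ ≤ ‖z‖² (‖z‖ + 1) / (4√2)` gives the bounds of (a), and iterating `‖G t‖ ≤ ‖G (2t)‖²`
gives `‖G t‖ ≤ 2^(-1/(2t))` near `0`. As `‖Df₀ z‖ ≤ ‖z‖`, both integrands in (b) are then at
least `c / t` near `0`, so `α = ∞` and the relations of (b) hold trivially.

For (c), the oscillation of `G` on the dyadic interval `[k/2ⁿ, (k+1)/2ⁿ]` is at most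
`W(n,k)^8`, where `W` multiplies, digit by digit, a weight whose eighth power dominates the
Lipschitz constant of `f₁`, or of `f₀` on a disc containing the relevant arc of the curve.
A potential on four zones of `[0,1]` shows `∑ₖ W(n,k) = O((91/50)ⁿ)`, so by Markov's
inequality and Borel–Cantelli almost every `t` has `W(n,k) ≤ (11/10)(11/12)ⁿ` for the
intervals near `t` once `n` is large. Then `‖G s - G t‖ = O((11/12)^(8n))` for
`|s - t| ≤ 2⁻ⁿ`, and `2 (11/12)⁸ < 1` makes the difference quotients tend to `0`.
-/

noncomputable section

lemma sqrt_two_gt : (1.41421 : ℝ) < √2 := by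
  nlinarith [Real.sq_sqrt (zero_le_two : (0 : ℝ) ≤ 2), Real.sqrt_nonneg 2]

lemma sqrt_two_lt : √2 < (1.41422 : ℝ) := by
  nlinarith [Real.sq_sqrt (zero_le_two : (0 : ℝ) ≤ 2), Real.sqrt_nonneg 2]

lemma norm_four_mul_one_add_I : ‖4 * (1 + Complex.I)‖ = 4 * √2 := by
  rw [norm_mul, Complex.norm_def (1 + _), Complex.normSq_apply]
  norm_num

lemma fEx_zero_apply (z : ℂ) :
    fEx 0 z = z ^ 2 * (z + Complex.I) / (4 * (1 + Complex.I)) := rfl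

lemma fEx_one_apply (z : ℂ) : fEx 1 z = (3 * z + 1) / 4 := rfl

lemma norm_fEx_zero_le (z : ℂ) : ‖fEx 0 z‖ ≤ ‖z‖ ^ 2 * (‖z‖ + 1) / (4 * √2) := by
  rw [fEx_zero_apply, norm_div, norm_mul, norm_pow, norm_four_mul_one_add_I]
  gcongr
  exact (norm_add_le _ _).trans_eq (by simp)

lemma norm_fEx_zero_sub_le {r : ℝ} {z w : ℂ} (hz : ‖z‖ ≤ r) (hw : ‖w‖ ≤ r) :
    ‖fEx 0 z - fEx 0 w‖ ≤ r * (3 * r + 2) / (4 * √2) * ‖z - w‖ := by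
  have hfactor : fEx 0 z - fEx 0 w
      = (z - w) * (z ^ 2 + z * w + w ^ 2 + Complex.I * (z + w)) / (4 * (1 + Complex.I)) := by
    rw [fEx_zero_apply, fEx_zero_apply]; ring
  have hsum : ‖z ^ 2 + z * w + w ^ 2 + Complex.I * (z + w)‖ ≤ r * (3 * r + 2) := by
    have := norm_nonneg z
    calc _ ≤ ‖z‖ ^ 2 + ‖z‖ * ‖w‖ + ‖w‖ ^ 2 + (‖z‖ + ‖w‖) := by
          refine (norm_add₄_le ..).trans ?_
          simp only [norm_pow, norm_mul, Complex.norm_I, one_mul]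
          gcongr; exact norm_add_le _ _
      _ ≤ r ^ 2 + r * r + r ^ 2 + (r + r) := by gcongr; linarith
      _ = r * (3 * r + 2) := by ring
  rw [hfactor, norm_div, norm_mul, norm_four_mul_one_add_I, mul_comm, mul_div_right_comm]
  gcongr

lemma norm_fEx_one_le {r : ℝ} {z : ℂ} (hz : ‖z‖ ≤ r) : ‖fEx 1 z‖ ≤ (3 * r + 1) / 4 := by
  rw [fEx_one_apply, norm_div, Complex.norm_ofNat]
  gcongr
  refine (norm_add_le _ _).trans ?_
  simp only [norm_mul, norm_one, Complex.norm_ofNat]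
  linarith

lemma norm_fEx_one_sub (z w : ℂ) : ‖fEx 1 z - fEx 1 w‖ = 3 / 4 * ‖z - w‖ := by
  rw [show fEx 1 z - fEx 1 w = (3 / 4 : ℝ) • (z - w) by simp [fEx]; ring, norm_smul]
  norm_num

lemma hasDerivAt_fEx_zero (z : ℂ) :
    HasDerivAt (fEx 0) ((3 * z ^ 2 + 2 * Complex.I * z) / (4 * (1 + Complex.I))) z := by
  rw [show fEx 0 = fun w ↦ w ^ 2 * (w + Complex.I) / (4 * (1 + Complex.I)) from
    funext fEx_zero_apply]
  refine (((hasDerivAt_pow 2 z).fun_mul ((hasDerivAt_id' z).add_const Complex.I)).div_const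
    _).congr_deriv ?_
  push_cast
  ring

lemma norm_fderiv_fEx_zero_le {z : ℂ} (hz : ‖z‖ ≤ 1) : ‖fderiv ℝ (fEx 0) z‖ ≤ ‖z‖ := by
  rw [((hasDerivAt_fEx_zero z).hasFDerivAt.restrictScalars ℝ).fderiv,
    ContinuousLinearMap.norm_restrictScalars, ContinuousLinearMap.norm_toSpanSingleton,
    show 3 * z ^ 2 + 2 * Complex.I * z = z * (3 * z + 2 * Complex.I) by ring,
    norm_div, norm_mul, norm_four_mul_one_add_I, mul_div_assoc]
  have h5 : ‖3 * z + 2 * Complex.I‖ ≤ 5 := by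
    refine (norm_add_le _ _).trans ?_
    simp only [norm_mul, Complex.norm_ofNat, Complex.norm_I]
    linarith
  refine mul_le_of_le_one_right (norm_nonneg z) ?_
  rw [div_le_one (by positivity)]
  linarith [sqrt_two_gt]

structure DeRhamSolution (G : ℝ → ℂ) : Prop where
  mapsTo : MapsTo G (Icc 0 1) {z : ℂ | ‖z‖ ≤ 1}
  eq_left : ∀ t : ℝ, 0 ≤ t → t ≤ 1 / 2 → G t = fEx 0 (G (2 * t))
  eq_right : ∀ t : ℝ, 1 / 2 ≤ t → t ≤ 1 → G t = fEx 1 (G (2 * t - 1))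

namespace DeRhamSolution

variable {G : ℝ → ℂ}

lemma norm_le_one (hG : DeRhamSolution G) {t : ℝ} (ht : t ∈ Icc (0 : ℝ) 1) : ‖G t‖ ≤ 1 :=
  hG.mapsTo ht

lemma norm_le_of_norm_two_mul_le (hG : DeRhamSolution G) {t r : ℝ} (ht : t ∈ Icc (0 : ℝ) (1 / 2))
    (hr : ‖G (2 * t)‖ ≤ r) : ‖G t‖ ≤ r ^ 2 * (r + 1) / (4 * √2) := by
  rw [hG.eq_left t ht.1 ht.2]
  refine (norm_fEx_zero_le _).trans ?_
  have := norm_nonneg (G (2 * t))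
  gcongr

lemma norm_le_sqrt_two_div_four (hG : DeRhamSolution G) {t : ℝ} (ht : t ∈ Icc (0 : ℝ) (1 / 2)) :
    ‖G t‖ ≤ √2 / 4 := by
  refine (hG.norm_le_of_norm_two_mul_le ht
    (hG.norm_le_one ⟨by linarith [ht.1], by linarith [ht.2]⟩)).trans_eq ?_
  field_simp
  rw [Real.sq_sqrt zero_le_two]
  norm_num

lemma norm_le_one_div_32 (hG : DeRhamSolution G) {t : ℝ} (ht : t ∈ Icc (0 : ℝ) (1 / 4)) :
    ‖G t‖ ≤ 1 / 32 := by
  refine (hG.norm_le_of_norm_two_mul_le ⟨ht.1, by linarith [ht.2]⟩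
    (hG.norm_le_sqrt_two_div_four ⟨by linarith [ht.1], by linarith [ht.2]⟩)).trans ?_
  rw [div_le_iff₀ (by positivity)]
  nlinarith [Real.sq_sqrt (zero_le_two : (0 : ℝ) ≤ 2), sqrt_two_gt, sqrt_two_lt]

lemma norm_le_sq (hG : DeRhamSolution G) {t : ℝ} (ht : t ∈ Icc (0 : ℝ) (1 / 2)) :
    ‖G t‖ ≤ ‖G (2 * t)‖ ^ 2 := by
  have h1 : ‖G (2 * t)‖ ≤ 1 := hG.norm_le_one ⟨by linarith [ht.1], by linarith [ht.2]⟩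
  refine (hG.norm_le_of_norm_two_mul_le ht le_rfl).trans ?_
  rw [div_le_iff₀ (by positivity)]
  have := norm_nonneg (G (2 * t))
  nlinarith [sqrt_two_gt, mul_nonneg (sq_nonneg ‖G (2 * t)‖) (sub_nonneg.2 h1)]

lemma norm_le_two_rpow (hG : DeRhamSolution G) {t : ℝ} (ht : t ∈ Ioc (0 : ℝ) (1 / 4)) :
    ‖G t‖ ≤ 2 ^ (-(2 * t)⁻¹) := by
  have base : ∀ t ∈ Icc (1 / 8 : ℝ) (1 / 4), ‖G t‖ ≤ 2 ^ (-(2 * t)⁻¹) := by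
    intro t ht
    refine (hG.norm_le_one_div_32 ⟨by linarith [ht.1], ht.2⟩).trans ?_
    calc (1 / 32 : ℝ) = 2 ^ (-5 : ℝ) := by norm_num
      _ ≤ 2 ^ (-(2 * t)⁻¹) := by
        gcongr
        · norm_num
        · rw [inv_le_comm₀ (by linarith [ht.1]) (by norm_num)]
          linarith [ht.1]
  have key : ∀ n : ℕ, ∀ t, (1 / 2) ^ n / 8 ≤ t → t ≤ 1 / 4 → ‖G t‖ ≤ 2 ^ (-(2 * t)⁻¹) := by
    intro n
    induction n with
    | zero => exact fun t h1 h2 ↦ base t ⟨by simpa using h1, h2⟩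
    | succ n ih =>
      intro t h1 h2
      by_cases h8 : 1 / 8 ≤ t
      · exact base t ⟨h8, h2⟩
      have ht0 : 0 < t := lt_of_lt_of_le (by positivity) h1
      calc ‖G t‖ ≤ ‖G (2 * t)‖ ^ 2 := hG.norm_le_sq ⟨ht0.le, by linarith⟩
        _ ≤ (2 ^ (-(2 * (2 * t))⁻¹)) ^ 2 := by
          gcongr
          exact ih _ (by rw [pow_succ] at h1; linarith) (by linarith)
        _ = 2 ^ (-(2 * t)⁻¹) := by
          rw [← Real.rpow_natCast, ← Real.rpow_mul zero_le_two]
          congr 1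
          field_simp
          norm_num
  obtain ⟨n, hn⟩ := exists_pow_lt_of_lt_one (by linarith [ht.1] : 0 < 8 * t)
    (by norm_num : (1 / 2 : ℝ) < 1)
  exact key n t (by linarith) ht.2

end DeRhamSolution

lemma negLogbE_antitoneOn {m : ℕ} (hm : 1 < m) : AntitoneOn (negLogbE m) (Ici 0) := by
  intro x hx y _ hxy
  rcases (mem_Ici.1 hx).eq_or_lt with rfl | hx0
  · simp [negLogbE]
  rw [negLogbE, negLogbE, if_neg (by linarith), if_neg hx0.ne']
  exact ENNReal.ofReal_le_ofReal
    (neg_le_neg (Real.logb_le_logb_of_le (by exact_mod_cast hm) hx0 hxy))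

lemma negLogbE_rpow_neg {m : ℕ} (hm : 1 < m) (a : ℝ) :
    negLogbE m ((m : ℝ) ^ (-a)) = ENNReal.ofReal a := by
  have hm' : (1 : ℝ) < m := by exact_mod_cast hm
  rw [negLogbE, if_neg (Real.rpow_pos_of_pos (by linarith) _).ne',
    Real.logb_rpow (by linarith) hm'.ne', neg_neg]

lemma negLogbE_le_of_le_two_rpow {x a : ℝ} (hx : 0 ≤ x) (hxa : x ≤ 2 ^ (-a)) :
    ENNReal.ofReal a ≤ negLogbE 2 x := by
  rw [← negLogbE_rpow_neg one_lt_two]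
  exact negLogbE_antitoneOn one_lt_two hx (by simp; positivity) (by exact_mod_cast hxa)

lemma setLIntegral_eq_top_of_inv_le {f : ℝ → ℝ≥0∞} {s : Set ℝ} {c δ : ℝ} (hc : 0 < c) (hδ : 0 < δ)
    (hs : Ioo 0 δ ⊆ s) (hf : ∀ t ∈ Ioo 0 δ, ENNReal.ofReal (c * t)⁻¹ ≤ f t) :
    ∫⁻ t in s, f t = ⊤ := by
  have hinv : ∫⁻ t in Ioo 0 δ, ENNReal.ofReal (c * t)⁻¹ = ⊤ := by
    by_contra h
    have hint : IntegrableOn (fun t : ℝ ↦ (c * t)⁻¹) (Ioo 0 δ) :=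
      ⟨by fun_prop, (hasFiniteIntegral_iff_ofReal (ae_restrict_of_forall_mem measurableSet_Ioo
        fun t ht ↦ by have := ht.1; positivity)).2 (lt_top_iff_ne_top.2 h)⟩
    have hrpow : IntegrableOn (fun t : ℝ ↦ t ^ (-1 : ℝ)) (Ioo 0 δ) :=
      IntegrableOn.congr_fun (hint.const_mul c) (fun t _ ↦ by
        rw [Real.rpow_neg_one, mul_inv, ← mul_assoc, mul_inv_cancel₀ hc.ne', one_mul])
        measurableSet_Ioo
    exact lt_irrefl _ ((intervalIntegral.integrableOn_Ioo_rpow_iff hδ).1 hrpow)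
  rw [← top_le_iff, ← hinv]
  exact (setLIntegral_mono' measurableSet_Ioo hf).trans (lintegral_mono_set hs)

lemma A1_eq_zero {m : ℕ} {t : ℝ} (h0 : 0 ≤ m * t) (h1 : m * t < 1) : A1 m t = 0 := by
  simp [A1, Int.floor_eq_zero_iff.2 ⟨h0, h1⟩]

lemma Hmap_eq_mul {m : ℕ} {t : ℝ} (h0 : 0 ≤ m * t) (h1 : m * t < 1) : Hmap m t = m * t := by
  simp [Hmap, Int.floor_eq_zero_iff.2 ⟨h0, h1⟩]

namespace DeRhamSolution

variable {G : ℝ → ℂ}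

lemma alphaEx_eq_top (hG : DeRhamSolution G) : alphaEx G = ⊤ := by
  refine setLIntegral_eq_top_of_inv_le (c := 4) (δ := 1 / 8) (by norm_num) (by norm_num)
    (Ioo_subset_Ico_self.trans (Ico_subset_Ico_right (by norm_num))) fun t ht ↦ ?_
  have h0 : (0 : ℝ) ≤ (2 : ℕ) * t := by push_cast; linarith [ht.1]
  have h1 : ((2 : ℕ) : ℝ) * t < 1 := by push_cast; linarith [ht.2]
  rw [A1_eq_zero h0 h1, Hmap_eq_mul h0 h1]
  push_cast
  have hG1 : ‖G (2 * t)‖ ≤ 1 := hG.norm_le_one ⟨by linarith [ht.1], by linarith [ht.2]⟩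
  refine negLogbE_le_of_le_two_rpow (norm_nonneg _)
    ((norm_fderiv_fEx_zero_le hG1).trans ((hG.norm_le_two_rpow ⟨by linarith [ht.1],
      by linarith [ht.2]⟩).trans_eq ?_))
  ring_nf

lemma lintegral_negLogbE_eq_top (hG : DeRhamSolution G) :
    ∫⁻ t in Ico (0 : ℝ) 1, negLogbE 2 (9 * ‖G t‖ * (3 * ‖G t‖ + 2) / (16 * √2)) = ⊤ := by
  refine setLIntegral_eq_top_of_inv_le (c := 2) (δ := 1 / 4) (by norm_num) (by norm_num)
    (Ioo_subset_Ico_self.trans (Ico_subset_Ico_right (by norm_num))) fun t ht ↦ ?_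
  have hx := hG.norm_le_one_div_32 ⟨ht.1.le, ht.2.le⟩
  have hx0 := norm_nonneg (G t)
  refine negLogbE_le_of_le_two_rpow (by positivity)
    (le_trans ?_ (hG.norm_le_two_rpow ⟨ht.1, ht.2.le⟩))
  rw [div_le_iff₀ (by positivity)]
  nlinarith [sqrt_two_gt]

end DeRhamSolution

def dyadicIcc (n k : ℕ) : Set ℝ := Icc (k / 2 ^ n) ((k + 1) / 2 ^ n)

lemma dyadicIcc_zero_zero : dyadicIcc 0 0 = Icc 0 1 := by simp [dyadicIcc]

lemma lt_two_pow_succ_cases {n k : ℕ} (hk : k < 2 ^ (n + 1)) :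
    k < 2 ^ n ∨ ∃ j < 2 ^ n, k = j + 2 ^ n := by
  rw [pow_succ] at hk
  by_cases h : k < 2 ^ n
  · exact .inl h
  · exact .inr ⟨k - 2 ^ n, by omega, by omega⟩

lemma mem_dyadicIcc_succ_left {n k : ℕ} (hk : k < 2 ^ n) {t : ℝ} (ht : t ∈ dyadicIcc (n + 1) k) :
    t ∈ Icc (0 : ℝ) (1 / 2) ∧ 2 * t ∈ dyadicIcc n k := by
  have hk' : (k : ℝ) + 1 ≤ 2 ^ n := by exact_mod_cast hk
  obtain ⟨h1, h2⟩ := ht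
  rw [pow_succ, ← div_div] at h1 h2
  refine ⟨⟨le_trans (by positivity) h1, h2.trans ?_⟩, by constructor <;> linarith⟩
  rw [div_le_div_iff_of_pos_right two_pos, div_le_one (by positivity)]
  exact hk'

lemma mem_dyadicIcc_succ_right {n k : ℕ} (hk : k < 2 ^ n) {t : ℝ}
    (ht : t ∈ dyadicIcc (n + 1) (k + 2 ^ n)) :
    t ∈ Icc (1 / 2 : ℝ) 1 ∧ 2 * t - 1 ∈ dyadicIcc n k := by
  have hk' : (k : ℝ) + 1 ≤ 2 ^ n := by exact_mod_cast hk
  have hp : (0 : ℝ) < 2 ^ n := by positivity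
  obtain ⟨h1, h2⟩ := ht
  push_cast at h1 h2
  rw [pow_succ] at h1 h2
  have e1 : ((k : ℝ) + 2 ^ n) / (2 ^ n * 2) = (k / 2 ^ n + 1) / 2 := by field_simp
  have e2 : ((k : ℝ) + 2 ^ n + 1) / (2 ^ n * 2) = ((k + 1) / 2 ^ n + 1) / 2 := by field_simp; ring
  rw [e1] at h1
  rw [e2] at h2
  have : (k + 1 : ℝ) / 2 ^ n ≤ 1 := (div_le_one hp).2 hk'
  refine ⟨⟨le_trans ?_ h1, by linarith⟩, by constructor <;> linarith⟩
  linarith [div_nonneg (Nat.cast_nonneg k) hp.le]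

lemma hasDerivWithinAt_zero_of_norm_sub_le {E : Type*} [NormedAddCommGroup E] [NormedSpace ℝ E]
    {G : ℝ → E} {s : Set ℝ} {t : ℝ} {ε : ℕ → ℝ} (hε : Tendsto ε atTop (𝓝 0))
    (h : ∀ᶠ n in atTop, ∀ x ∈ s, |x - t| ≤ (2 ^ n)⁻¹ → ‖G x - G t‖ ≤ ε n * (2 ^ n)⁻¹) :
    HasDerivWithinAt G 0 s t := by
  rw [hasDerivWithinAt_iff_isLittleO]
  simp only [smul_zero, sub_zero]
  refine Asymptotics.IsLittleO.of_bound fun c hc ↦ ?_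
  obtain ⟨N, hN⟩ := eventually_atTop.1 (h.and (Metric.tendsto_nhds.1 hε (c / 2) (half_pos hc)))
  filter_upwards [self_mem_nhdsWithin,
    nhdsWithin_le_nhds (Metric.ball_mem_nhds t (inv_pos.2 (pow_pos two_pos N)))] with x hxs hxt
  rw [Metric.mem_ball, Real.dist_eq] at hxt
  rcases eq_or_ne x t with rfl | hne
  · simp
  have hd : 0 < |x - t| := abs_pos.2 (sub_ne_zero.2 hne)
  have hN1 : (2 ^ N : ℝ)⁻¹ ≤ 1 := inv_le_one_of_one_le₀ (one_le_pow₀ one_le_two)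
  obtain ⟨m, hm1, hm2⟩ := exists_nat_pow_near (one_le_inv₀ hd |>.2 (by linarith)) one_lt_two
  have hNm : N ≤ m := by
    have : (2 : ℝ) ^ N < 2 ^ (m + 1) := (lt_inv_comm₀ hd (by positivity) |>.1 hxt).trans hm2
    have := (pow_lt_pow_iff_right₀ one_lt_two).1 this
    omega
  have hdm : |x - t| ≤ (2 ^ m)⁻¹ := (le_inv_comm₀ (by positivity) hd).1 hm1
  have hmd : (2 ^ m : ℝ)⁻¹ < 2 * |x - t| := by
    rw [pow_succ] at hm2
    have := (inv_lt_comm₀ hd (by positivity)).1 hm2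
    rw [mul_inv] at this
    linarith
  obtain ⟨hbound, hεm⟩ := hN m hNm
  rw [Real.dist_0_eq_abs] at hεm
  rw [Real.norm_eq_abs]
  calc ‖G x - G t‖ ≤ ε m * (2 ^ m)⁻¹ := hbound x hxs hdm
    _ ≤ |ε m| * (2 ^ m)⁻¹ := by gcongr; exact le_abs_self _
    _ ≤ c / 2 * (2 * |x - t|) := by gcongr
    _ = c * |x - t| := by ring

lemma norm_sub_le_of_dyadicIcc {E : Type*} [SeminormedAddCommGroup E] {G : ℝ → E} {n : ℕ}
    {B t x : ℝ} (hB : ∀ k : ℕ, k < 2 ^ n → t ∈ Icc (((k : ℝ) - 1) / 2 ^ n) ((k + 2) / 2 ^ n) →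
      ∀ y ∈ dyadicIcc n k, ∀ z ∈ dyadicIcc n k, ‖G y - G z‖ ≤ B)
    (ht : t ∈ Ico (0 : ℝ) 1) (hx : x ∈ Icc (0 : ℝ) 1) (hxt : |x - t| ≤ (2 ^ n)⁻¹) :
    ‖G x - G t‖ ≤ 2 * B := by
  have hp : (0 : ℝ) < 2 ^ n := by positivity
  suffices key : ∀ a b, 0 ≤ a → a ≤ t → t ≤ b → b ≤ 1 → b - a ≤ (2 ^ n)⁻¹ →
      ‖G a - G b‖ ≤ 2 * B by
    rcases le_total x t with hxt' | hxt'
    · refine key x t hx.1 hxt' le_rfl ht.2.le ?_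
      rwa [abs_sub_comm, abs_of_nonneg (by linarith)] at hxt
    · rw [norm_sub_rev]
      exact key t x ht.1 le_rfl hxt' hx.2 (by rwa [abs_of_nonneg (by linarith)] at hxt)
  intro a b ha hat htb hb hba
  -- `a` lies in the dyadic interval of index `k`, and `b` in that one or the next.
  set k := ⌊2 ^ n * a⌋₊
  have hka : (k : ℝ) / 2 ^ n ≤ a := by
    rw [div_le_iff₀' hp]; exact Nat.floor_le (by positivity)
  have hak : a < (k + 1) / 2 ^ n := by
    rw [lt_div_iff₀' hp]; exact Nat.lt_floor_add_one _
  have hb2 : b < (k + 2) / 2 ^ n := by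
    have : ((k : ℝ) + 2) / 2 ^ n = (k + 1) / 2 ^ n + (2 ^ n)⁻¹ := by field_simp; ring
    linarith
  have hk : k < 2 ^ n := by
    have : (k : ℝ) < 2 ^ n := by
      rw [← div_lt_one hp]; linarith [ht.2]
    exact_mod_cast this
  have hmono : ∀ i j : ℝ, i ≤ j → i / 2 ^ n ≤ j / 2 ^ n := fun i j h ↦ by gcongr
  have hBk := hB k hk ⟨by linarith [hmono (k - 1) k (by linarith)], by linarith⟩
  have haI : a ∈ dyadicIcc n k := ⟨hka, hak.le⟩
  have hB0 : 0 ≤ B := (norm_nonneg _).trans (hBk a haI a haI)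
  by_cases hbk : b ≤ (k + 1) / 2 ^ n
  · linarith [hBk a haI b ⟨by linarith, hbk⟩]
  replace hbk := not_le.1 hbk
  have hk1 : k + 1 < 2 ^ n := by
    have : (k : ℝ) + 1 < 2 ^ n := by
      rw [← div_lt_one hp]; linarith
    exact_mod_cast this
  have hBk1 := hB (k + 1) hk1 ⟨by push_cast; rw [add_sub_cancel_right]; linarith,
    by push_cast; linarith [hmono (k + 2) (k + 1 + 2) (by linarith)]⟩
  have hpI : ((k : ℝ) + 1) / 2 ^ n ∈ dyadicIcc n k := ⟨hmono k (k + 1) (by linarith), le_rfl⟩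
  have hpI1 : ((k : ℝ) + 1) / 2 ^ n ∈ dyadicIcc n (k + 1) := ⟨by push_cast; rfl, by
    push_cast; exact hmono _ _ (by linarith)⟩
  have hbI1 : b ∈ dyadicIcc n (k + 1) :=
    ⟨by push_cast; linarith, by push_cast; rw [add_assoc, one_add_one_eq_two]; linarith⟩
  calc ‖G a - G b‖ ≤ ‖G a - G ((k + 1) / 2 ^ n)‖ + ‖G ((k + 1) / 2 ^ n) - G b‖ :=
        norm_sub_le_norm_sub_add_norm_sub _ _ _
    _ ≤ B + B := add_le_add (hBk _ haI _ hpI) (hBk1 _ hpI1 _ hbI1)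
    _ = 2 * B := by ring

/-- `(zone n k).radius` bounds `‖G‖` on `dyadicIcc n k`; an interval of zone `A`, `B`, `C` lies
in `[0,1/4]`, `[0,1/2]`, `[1/2,3/4]` respectively. The eighth power of `weight` dominates the
Lipschitz constant of `f₀` on the disc of radius `radius`, and `potential` is a test vector
for the transfer operator of the weights, with growth factor `91/50`. -/
inductive Zone
  | A | B | C | D

namespace Zone

def left : Zone → Zone
  | A | B => A
  | C | D => B

def right : Zone → Zone
  | A | B => C
  | C | D => D

def radius : Zone → ℝ
  | A => 1 / 32
  | B => √2 / 4
  | C => (4 + 3 * √2) / 16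
  | D => 1

def weight : Zone → ℝ
  | A => 23 / 40
  | B => 163 / 200
  | C => 87 / 100
  | D => 197 / 200

def potential : Zone → ℝ
  | A => 3 / 4
  | B => 17 / 20
  | C => 19 / 20
  | D => 1

lemma radius_nonneg (X : Zone) : 0 ≤ X.radius := by
  cases X <;> simp only [radius] <;> positivity

lemma weight_pos (X : Zone) : 0 < X.weight := by
  cases X <;> norm_num [weight]

lemma three_fourths_le_potential (X : Zone) : 3 / 4 ≤ X.potential := by
  cases X <;> norm_num [potential]

lemma radius_left_ge (X : Zone) : X.radius ^ 2 * (X.radius + 1) / (4 * √2) ≤ X.left.radius := by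
  rw [div_le_iff₀ (by positivity)]
  have := Real.sq_sqrt (zero_le_two : (0 : ℝ) ≤ 2)
  cases X <;> simp only [radius, left] <;> nlinarith [sqrt_two_gt, sqrt_two_lt]

lemma radius_right_ge (X : Zone) : (3 * X.radius + 1) / 4 ≤ X.right.radius := by
  cases X <;> simp only [radius, right] <;> nlinarith [sqrt_two_gt, sqrt_two_lt]

lemma lipschitz_le_weight_pow (X : Zone) :
    X.radius * (3 * X.radius + 2) / (4 * √2) ≤ X.weight ^ 8 := by
  rw [div_le_iff₀ (by positivity)]
  have := Real.sq_sqrt (zero_le_two : (0 : ℝ) ≤ 2)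
  cases X <;> simp only [radius, weight] <;> nlinarith [sqrt_two_gt, sqrt_two_lt]

lemma potential_step (X : Zone) :
    X.left.potential * X.weight + X.right.potential * (193 / 200) ≤ 91 / 50 * X.potential := by
  cases X <;> norm_num [potential, weight, left, right]

end Zone

def zone : ℕ → ℕ → Zone
  | 0, _ => .D
  | n + 1, k => if k < 2 ^ n then (zone n k).left else (zone n (k - 2 ^ n)).right

def dyadicWeight : ℕ → ℕ → ℝ
  | 0, _ => 11 / 10
  | n + 1, k =>
    if k < 2 ^ n then (zone n k).weight * dyadicWeight n k
    else 193 / 200 * dyadicWeight n (k - 2 ^ n)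

lemma zone_succ_of_lt {n k : ℕ} (hk : k < 2 ^ n) : zone (n + 1) k = (zone n k).left := by
  simp [zone, hk]

lemma zone_succ_add {n k : ℕ} : zone (n + 1) (k + 2 ^ n) = (zone n k).right := by
  simp [zone]

lemma dyadicWeight_succ_of_lt {n k : ℕ} (hk : k < 2 ^ n) :
    dyadicWeight (n + 1) k = (zone n k).weight * dyadicWeight n k := by
  simp [dyadicWeight, hk]

lemma dyadicWeight_succ_add {n k : ℕ} :
    dyadicWeight (n + 1) (k + 2 ^ n) = 193 / 200 * dyadicWeight n k := by
  simp [dyadicWeight]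

lemma dyadicWeight_pos : ∀ n k, 0 < dyadicWeight n k
  | 0, _ => by norm_num [dyadicWeight]
  | n + 1, k => by
    rw [dyadicWeight]
    split_ifs
    · exact mul_pos (Zone.weight_pos _) (dyadicWeight_pos n k)
    · exact mul_pos (by norm_num) (dyadicWeight_pos n _)

namespace DeRhamSolution

variable {G : ℝ → ℂ}

lemma norm_le_radius (hG : DeRhamSolution G) :
    ∀ n k, k < 2 ^ n → ∀ t ∈ dyadicIcc n k, ‖G t‖ ≤ (zone n k).radius
  | 0, k, hk, t, ht => by
    obtain rfl : k = 0 := by simpa using hk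
    rw [dyadicIcc_zero_zero] at ht
    exact hG.norm_le_one ht
  | n + 1, k, hk, t, ht => by
    rcases lt_two_pow_succ_cases hk with hk | ⟨j, hj, rfl⟩
    · obtain ⟨ht, h2t⟩ := mem_dyadicIcc_succ_left hk ht
      rw [zone_succ_of_lt hk]
      exact (hG.norm_le_of_norm_two_mul_le ht (hG.norm_le_radius n k hk _ h2t)).trans
        (Zone.radius_left_ge _)
    · obtain ⟨ht, h2t⟩ := mem_dyadicIcc_succ_right hj ht
      rw [zone_succ_add, hG.eq_right t ht.1 ht.2]
      exact (norm_fEx_one_le (hG.norm_le_radius n j hj _ h2t)).trans (Zone.radius_right_ge _)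

lemma norm_sub_le_dyadicWeight_pow (hG : DeRhamSolution G) :
    ∀ n k, k < 2 ^ n → ∀ s ∈ dyadicIcc n k, ∀ t ∈ dyadicIcc n k,
      ‖G s - G t‖ ≤ dyadicWeight n k ^ 8
  | 0, k, hk, s, hs, t, ht => by
    obtain rfl : k = 0 := by simpa using hk
    rw [dyadicIcc_zero_zero] at hs ht
    calc ‖G s - G t‖ ≤ ‖G s‖ + ‖G t‖ := norm_sub_le _ _
      _ ≤ 1 + 1 := add_le_add (hG.norm_le_one hs) (hG.norm_le_one ht)
      _ ≤ dyadicWeight 0 0 ^ 8 := by norm_num [dyadicWeight]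
  | n + 1, k, hk, s, hs, t, ht => by
    rcases lt_two_pow_succ_cases hk with hk | ⟨j, hj, rfl⟩
    · obtain ⟨hs, h2s⟩ := mem_dyadicIcc_succ_left hk hs
      obtain ⟨ht, h2t⟩ := mem_dyadicIcc_succ_left hk ht
      rw [dyadicWeight_succ_of_lt hk, mul_pow, hG.eq_left s hs.1 hs.2, hG.eq_left t ht.1 ht.2]
      refine (norm_fEx_zero_sub_le (hG.norm_le_radius n k hk _ h2s)
        (hG.norm_le_radius n k hk _ h2t)).trans ?_
      exact mul_le_mul (Zone.lipschitz_le_weight_pow _)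
        (hG.norm_sub_le_dyadicWeight_pow n k hk _ h2s _ h2t) (norm_nonneg _) (by positivity)
    · obtain ⟨hs, h2s⟩ := mem_dyadicIcc_succ_right hj hs
      obtain ⟨ht, h2t⟩ := mem_dyadicIcc_succ_right hj ht
      rw [dyadicWeight_succ_add, mul_pow, hG.eq_right s hs.1 hs.2, hG.eq_right t ht.1 ht.2,
        norm_fEx_one_sub]
      exact mul_le_mul (by norm_num) (hG.norm_sub_le_dyadicWeight_pow n j hj _ h2s _ h2t)
        (norm_nonneg _) (by positivity)

end DeRhamSolution

lemma sum_potential_mul_dyadicWeight_le (n : ℕ) :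
    ∑ k ∈ Finset.range (2 ^ n), (zone n k).potential * dyadicWeight n k
      ≤ 11 / 10 * (91 / 50) ^ n := by
  induction n with
  | zero => norm_num [zone, dyadicWeight, Zone.potential]
  | succ n ih =>
    calc ∑ k ∈ Finset.range (2 ^ (n + 1)), (zone (n + 1) k).potential * dyadicWeight (n + 1) k
        = ∑ k ∈ Finset.range (2 ^ n), ((zone n k).left.potential * (zone n k).weight
            + (zone n k).right.potential * (193 / 200)) * dyadicWeight n k := by
          rw [pow_succ, mul_two, Finset.sum_range_add, ← Finset.sum_add_distrib]
          refine Finset.sum_congr rfl fun k hk ↦ ?_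
          have hk : k < 2 ^ n := Finset.mem_range.1 hk
          rw [add_comm (2 ^ n) k, zone_succ_of_lt hk, zone_succ_add, dyadicWeight_succ_of_lt hk,
            dyadicWeight_succ_add]
          ring
      _ ≤ ∑ k ∈ Finset.range (2 ^ n), 91 / 50 * ((zone n k).potential * dyadicWeight n k) :=
          Finset.sum_le_sum fun k _ ↦ by
            rw [← mul_assoc]
            exact mul_le_mul_of_nonneg_right (Zone.potential_step _) (dyadicWeight_pos n k).le
      _ ≤ 91 / 50 * (11 / 10 * (91 / 50) ^ n) := by
          rw [← Finset.mul_sum]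
          gcongr
      _ = 11 / 10 * (91 / 50) ^ (n + 1) := by ring

def badIndices (n : ℕ) : Finset ℕ :=
  {k ∈ Finset.range (2 ^ n) | 11 / 10 * (11 / 12) ^ n < dyadicWeight n k}

def badSet (n : ℕ) : Set ℝ :=
  ⋃ k ∈ badIndices n, Icc ((k - 1) / 2 ^ n) ((k + 2) / 2 ^ n)

lemma card_badIndices_le (n : ℕ) : ((badIndices n).card : ℝ) ≤ 4 / 3 * (546 / 275) ^ n := by
  have hmarkov : (badIndices n).card • (3 / 4 * (11 / 10 * (11 / 12) ^ n))
      ≤ ∑ k ∈ badIndices n, (zone n k).potential * dyadicWeight n k :=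
    Finset.card_nsmul_le_sum _ _ _ fun k hk ↦ mul_le_mul (Zone.three_fourths_le_potential _)
      (Finset.mem_filter.1 hk).2.le (by positivity)
      (by linarith [Zone.three_fourths_le_potential (zone n k)])
  have hsub : ∑ k ∈ badIndices n, (zone n k).potential * dyadicWeight n k
      ≤ ∑ k ∈ Finset.range (2 ^ n), (zone n k).potential * dyadicWeight n k :=
    Finset.sum_le_sum_of_subset_of_nonneg (Finset.filter_subset _ _) fun k _ _ ↦
      mul_nonneg (by linarith [Zone.three_fourths_le_potential (zone n k)])
        (dyadicWeight_pos n k).le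
  have h := (hmarkov.trans hsub).trans (sum_potential_mul_dyadicWeight_le n)
  rw [nsmul_eq_mul, ← le_div_iff₀ (by positivity)] at h
  refine h.trans_eq ?_
  rw [show (546 / 275 : ℝ) ^ n = (91 / 50) ^ n / (11 / 12) ^ n by rw [← div_pow]; norm_num]
  field_simp

lemma volume_badSet_le (n : ℕ) : volume (badSet n) ≤ ENNReal.ofReal (4 * (273 / 275) ^ n) := by
  have hIcc (k : ℕ) : volume (Icc (((k : ℝ) - 1) / 2 ^ n) ((k + 2) / 2 ^ n))
      = ENNReal.ofReal (3 / 2 ^ n) := by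
    rw [Real.volume_Icc]
    congr 1
    ring
  calc volume (badSet n)
      ≤ ∑ k ∈ badIndices n, volume (Icc (((k : ℝ) - 1) / 2 ^ n) ((k + 2) / 2 ^ n)) :=
        measure_biUnion_finset_le _ _
    _ = ENNReal.ofReal ((badIndices n).card * (3 / 2 ^ n)) := by
        simp_rw [hIcc, Finset.sum_const, nsmul_eq_mul]
        rw [ENNReal.ofReal_mul (by positivity), ENNReal.ofReal_natCast]
    _ ≤ ENNReal.ofReal (4 * (273 / 275) ^ n) := by
        refine ENNReal.ofReal_le_ofReal ((mul_le_mul_of_nonneg_right (card_badIndices_le n)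
          (by positivity)).trans_eq ?_)
        rw [show (273 / 275 : ℝ) ^ n = (546 / 275) ^ n / 2 ^ n by rw [← div_pow]; norm_num]
        field_simp

lemma ae_eventually_not_mem_badSet : ∀ᵐ t : ℝ, ∀ᶠ n in atTop, t ∉ badSet n := by
  refine ae_eventually_notMem (ne_top_of_le_ne_top ?_ (ENNReal.tsum_le_tsum volume_badSet_le))
  rw [← ENNReal.ofReal_tsum_of_nonneg (fun n ↦ by positivity)
    ((summable_geometric_of_lt_one (by norm_num) (by norm_num)).mul_left 4)]
  exact ENNReal.ofReal_ne_top

lemma DeRhamSolution.hasDerivWithinAt_zero {G : ℝ → ℂ} (hG : DeRhamSolution G) {t : ℝ}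
    (ht : t ∈ Ico (0 : ℝ) 1) (hgood : ∀ᶠ n in atTop, t ∉ badSet n) :
    HasDerivWithinAt G 0 (Icc 0 1) t := by
  refine hasDerivWithinAt_zero_of_norm_sub_le
    (ε := fun n ↦ 2 * (11 / 10) ^ 8 * (2 * (11 / 12) ^ 8) ^ n) ?_ ?_
  · convert (tendsto_pow_atTop_nhds_zero_of_lt_one (r := 2 * (11 / 12 : ℝ) ^ 8) (by norm_num)
      (by norm_num)).const_mul (2 * (11 / 10 : ℝ) ^ 8) using 2
    rw [mul_zero]
  filter_upwards [hgood] with n hn x hx hxt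
  refine (norm_sub_le_of_dyadicIcc (B := (11 / 10 * (11 / 12) ^ n) ^ 8)
    (fun k hk htk y hy z hz ↦ ?_) ht hx hxt).trans_eq ?_
  · have hkgood : dyadicWeight n k ≤ 11 / 10 * (11 / 12) ^ n := by
      by_contra hbad
      exact hn (mem_biUnion (Finset.mem_filter.2 ⟨Finset.mem_range.2 hk, not_le.1 hbad⟩) htk)
    exact (hG.norm_sub_le_dyadicWeight_pow n k hk y hy z hz).trans
      (pow_le_pow_left₀ (dyadicWeight_pos n k).le hkgood 8)
  · rw [mul_pow, ← pow_mul, mul_pow, ← pow_mul]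
    field_simp
    ring

end

theorem deRham_example_complex_cubic_general (G : ℝ → ℂ)
    (hGX : Set.MapsTo G (Set.Icc 0 1) {z : ℂ | ‖z‖ ≤ 1})
    (hGeq0 : ∀ t : ℝ, 0 ≤ t → t ≤ 1 / 2 → G t = fEx 0 (G (2 * t)))
    (hGeq1 : ∀ t : ℝ, 1 / 2 ≤ t → t ≤ 1 → G t = fEx 1 (G (2 * t - 1))) :
    (∀ t ∈ Set.Icc (0 : ℝ) (1 / 2), ‖G t‖ ≤ Real.sqrt 2 / 4) ∧
    (∀ t ∈ Set.Icc (0 : ℝ) (1 / 4), ‖G t‖ ≤ ((2 : ℝ) ^ (5 : ℕ))⁻¹) ∧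
    alphaEx G = (1 / 2) * ∫⁻ t in Set.Ico (0 : ℝ) 1,
      negLogbE 2 (9 * ‖G t‖ * (3 * ‖G t‖ + 2) /
        (16 * Real.sqrt 2)) ∧
    ENNReal.ofReal (9 / 4 - Real.logb 2 15 / 2) +
        (1 / 2) * ∫⁻ t in Set.Ico (0 : ℝ) 1, negLogbE 2 (‖G t‖)
      ≤ alphaEx G ∧
    1 < alphaEx G ∧
    ∀ᵐ t ∂(volume.restrict (Set.Ioo (0 : ℝ) 1)),
      HasDerivWithinAt G 0 (Set.Icc (0 : ℝ) 1) t := by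
  have hG : DeRhamSolution G := ⟨hGX, hGeq0, hGeq1⟩
  have hα := hG.alphaEx_eq_top
  refine ⟨fun t ht ↦ hG.norm_le_sqrt_two_div_four ht,
    fun t ht ↦ (hG.norm_le_one_div_32 ht).trans_eq (by norm_num), ?_,
    hα ▸ le_top, hα ▸ ENNReal.one_lt_top, ?_⟩
  · rw [hα, hG.lintegral_negLogbE_eq_top, ENNReal.mul_top (by norm_num)]
  · filter_upwards [ae_restrict_of_ae ae_eventually_not_mem_badSet,
      ae_restrict_mem measurableSet_Ioo] with t hgood ht
    exact hG.hasDerivWithinAt_zero (Ioo_subset_Ico_self ht) hgood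

/-- **Example 2.4.** Let `X = {z : |z| ≤ 1}`, `f₀(z) = z²(z+i)/(4(1+i))`,
`f₁(z) = (3z+1)/4`, and let `G : [0,1] → X` be the unique continuous solution of
`G(t) = f₀(G(2t))` for `0 ≤ t ≤ 1/2` and `G(t) = f₁(G(2t-1))` for `1/2 ≤ t ≤ 1`. Then:
(a) `|G(t)| ≤ √2/4` on `[0,1/2]` and `|G(t)| ≤ 2⁻⁵` on `[0,1/4]`;
(b) `α = (1/2)∫₀¹ -log₂(9|G(t)|(3|G(t)|+2)/(16√2)) dt
      ≥ 9/4 - (log₂ 15)/2 - (1/2)∫₀¹ log₂|G(t)| dt > 1`;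
(c) consequently the Fréchet derivative of `G` exists and is zero Lebesgue-a.e. -/
theorem deRham_example_complex_cubic (G : ℝ → ℂ)
    (hGc : ContinuousOn G (Set.Icc 0 1))
    (hGX : Set.MapsTo G (Set.Icc 0 1) {z : ℂ | ‖z‖ ≤ 1})
    (hGeq0 : ∀ t : ℝ, 0 ≤ t → t ≤ 1 / 2 → G t = fEx 0 (G (2 * t)))
    (hGeq1 : ∀ t : ℝ, 1 / 2 ≤ t → t ≤ 1 → G t = fEx 1 (G (2 * t - 1)))
    (hG0 : G 0 = 0) (hG1 : G 1 = 1) :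
    (∀ t ∈ Set.Icc (0 : ℝ) (1 / 2), ‖G t‖ ≤ Real.sqrt 2 / 4) ∧
    (∀ t ∈ Set.Icc (0 : ℝ) (1 / 4), ‖G t‖ ≤ ((2 : ℝ) ^ (5 : ℕ))⁻¹) ∧
    alphaEx G = (1 / 2) * ∫⁻ t in Set.Ico (0 : ℝ) 1,
      negLogbE 2 (9 * ‖G t‖ * (3 * ‖G t‖ + 2) /
        (16 * Real.sqrt 2)) ∧
    ENNReal.ofReal (9 / 4 - Real.logb 2 15 / 2) +
        (1 / 2) * ∫⁻ t in Set.Ico (0 : ℝ) 1, negLogbE 2 (‖G t‖)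
      ≤ alphaEx G ∧
    1 < alphaEx G ∧
    ∀ᵐ t ∂(volume.restrict (Set.Ioo (0 : ℝ) 1)),
      HasDerivWithinAt G 0 (Set.Icc (0 : ℝ) 1) t :=
  deRham_example_complex_cubic_general G hGX hGeq0 hGeq1
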